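/- arXiv:1708.03021 — 2 statements merged into one kernel-verified Lean document; each statement's English description precedes it below -/
import Mathlib

section
/- Let $\{e_1, e_2, e_3\}$ be a standard Milnor basis of $\mathfrak{su}(2)$ and define $H(u,v) = \exp(-u e_1)\exp(-v e_2)\exp(u e_1)\exp(v e_2)$. Then for all real $u,v$: $H(u,v) = \frac{1}{2}\big((1+\cos u) + \cos v(1-\cos u)\big) I - \big((1-\cos v)\sin u\big) e_1 + \sin v (1-\cos u)\, e_2 + (\sin v \sin u)\, e_3$. -/
/-!
Squares of traceless `2 × 2` matrices are scalar; together with the Milnor bracket relations this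
forces `e₀² = e₁² = -1/4` and `e₀ e₁ = -e₁ e₀ = e₂ / 2`, so `2e₀, 2e₁, 2e₂` multiply like the
quaternion units `i, j, k`. Hence `exp (t e₀) = cos (t/2) + sin (t/2) i`, similarly for `e₁`, and `H(u, v)`
is a product of four unit quaternions, expanded with the half-angle formulas.
-/

open Matrix

section MilnorRelations

variable {A : Type*} [Ring A]

theorem mul_commutator_eq_neg_commutator_mul {a b : A} (h : Commute (a * a) b) :
    a * (a * b - b * a) = -((a * b - b * a) * a) := by
  rw [eq_neg_iff_add_eq_zero]
  calc a * (a * b - b * a) + (a * b - b * a) * a = a * a * b - b * (a * a) := by noncomm_ring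
    _ = 0 := sub_eq_zero.2 h.eq

variable {K : Type*} [Field K] [NeZero (2 : K)] [Algebra K A]

theorem mul_eq_half_smul_of_anticommute {a b c : A} (hc : a * b - b * a = c)
    (hanti : b * a = -(a * b)) : a * b = (2⁻¹ : K) • c := by
  have : c = (2 : K) • (a * b) := by rw [← hc, hanti, sub_neg_eq_add, two_smul]
  rw [this, smul_smul, inv_mul_cancel₀ two_ne_zero, one_smul]

theorem mul_table_of_milnor_relations {x y z : A} {α β : K} (hx : x * x = α • 1)
    (hy : y * y = β • 1) (h12 : x * y - y * x = z) (h23 : y * z - z * y = x)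
    (h31 : z * x - x * z = y) (hx0 : x ≠ 0) (hy0 : y ≠ 0) :
    x * x = (-4⁻¹ : K) • 1 ∧ y * y = (-4⁻¹ : K) • 1 ∧
      x * y = (2⁻¹ : K) • z ∧ y * x = -(2⁻¹ : K) • z := by
  have hx_comm (b : A) : Commute (x * x) b := hx ▸ (Commute.one_left b).smul_left α
  have hy_comm (b : A) : Commute (y * y) b := hy ▸ (Commute.one_left b).smul_left β
  have hxy_anti : y * x = -(x * y) := by
    have := mul_commutator_eq_neg_commutator_mul (hx_comm z)
    rw [← neg_sub, h31, mul_neg, neg_mul, neg_neg] at this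
    exact this.symm
  have hxz_anti : x * z = -(z * x) := by
    simpa only [h12] using mul_commutator_eq_neg_commutator_mul (hx_comm y)
  have hyz_anti : z * y = -(y * z) := by
    have := mul_commutator_eq_neg_commutator_mul (hy_comm x)
    rw [← neg_sub, h12, mul_neg, neg_mul, neg_neg] at this
    exact this.symm
  have hxy : x * y = (2⁻¹ : K) • z := mul_eq_half_smul_of_anticommute h12 hxy_anti
  have hzx : z * x = (2⁻¹ : K) • y := mul_eq_half_smul_of_anticommute h31 hxz_anti
  have hyz : y * z = (2⁻¹ : K) • x := mul_eq_half_smul_of_anticommute h23 hyz_anti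
  have hyx : y * x = -(2⁻¹ : K) • z := by rw [hxy_anti, hxy, neg_smul]
  have hxz : x * z = -(2⁻¹ : K) • y := by rw [hxz_anti, hzx, neg_smul]
  have quarter : (2⁻¹ : K) * -2⁻¹ = -4⁻¹ := by
    rw [mul_neg, ← mul_inv, show (2 : K) * 2 = 4 by norm_num]
  refine ⟨?_, ?_, hxy, hyx⟩
  · have : α • y = (-4⁻¹ : K) • y := by
      calc α • y = x * (x * y) := by rw [← mul_assoc, hx, smul_mul_assoc, one_mul]
        _ = (-4⁻¹ : K) • y := by rw [hxy, mul_smul_comm, hxz, smul_smul, quarter]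
    rw [hx, smul_left_injective K hy0 this]
  · have : β • x = (-4⁻¹ : K) • x := by
      calc β • x = y * (y * x) := by rw [← mul_assoc, hy, smul_mul_assoc, one_mul]
        _ = (-4⁻¹ : K) • x := by rw [hyx, mul_smul_comm, hyz, smul_smul, mul_comm, quarter]
    rw [hy, smul_left_injective K hx0 this]

end MilnorRelations

theorem exp_smul_of_mul_self_eq_neg_one {A : Type*} [NormedRing A] [NormedAlgebra ℝ A]
    [Algebra ℚ A] {J : A} (hJ : J * J = -1) (t : ℝ) :
    NormedSpace.exp (t • J) = Real.cos t • (1 : A) + Real.sin t • J := by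
  set φ := Complex.liftAux J hJ
  have hφ : Continuous φ := φ.toLinearMap.continuous_of_finiteDimensional
  calc NormedSpace.exp (t • J) = φ (NormedSpace.exp (t * Complex.I)) := by
        rw [NormedSpace.map_exp φ hφ]; simp [φ, Complex.liftAux_apply]
    _ = Real.cos t • (1 : A) + Real.sin t • J := by
        rw [← Complex.exp_eq_exp_ℂ, Complex.exp_mul_I]
        simp [φ, Complex.liftAux_apply, Algebra.algebraMap_eq_smul_one, Complex.cos_ofReal_re,
          Complex.sin_ofReal_re]

namespace QuaternionAlgebra.Basis

def ofHalfUnits {A : Type*} [Ring A] [Algebra ℝ A] {x y z : A}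
    (hxx : x * x = (-4⁻¹ : ℝ) • 1) (hyy : y * y = (-4⁻¹ : ℝ) • 1)
    (hxy : x * y = (2⁻¹ : ℝ) • z) (hyx : y * x = -(2⁻¹ : ℝ) • z) :
    QuaternionAlgebra.Basis A (-1 : ℝ) 0 (-1) where
  i := (2 : ℝ) • x
  j := (2 : ℝ) • y
  k := (2 : ℝ) • z
  i_mul_i := by rw [smul_mul_smul, hxx, smul_smul]; norm_num
  j_mul_j := by rw [smul_mul_smul, hyy, smul_smul]; norm_num
  i_mul_j := by rw [smul_mul_smul, hxy, smul_smul]; norm_num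
  j_mul_i := by rw [smul_mul_smul, hyx, smul_smul]; norm_num

variable {A : Type*} [NormedRing A] [NormedAlgebra ℝ A] [Algebra ℚ A]
  (b : QuaternionAlgebra.Basis A (-1 : ℝ) 0 (-1))

theorem exp_smul_i (t : ℝ) :
    NormedSpace.exp (t • b.i) = Real.cos t • (1 : A) + Real.sin t • b.i :=
  exp_smul_of_mul_self_eq_neg_one (by simp) t

theorem exp_smul_j (t : ℝ) :
    NormedSpace.exp (t • b.j) = Real.cos t • (1 : A) + Real.sin t • b.j :=
  exp_smul_of_mul_self_eq_neg_one (by simp) t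

theorem exp_commutator (u v : ℝ) :
    NormedSpace.exp ((-(u / 2)) • b.i) * NormedSpace.exp ((-(v / 2)) • b.j)
        * NormedSpace.exp ((u / 2) • b.i) * NormedSpace.exp ((v / 2) • b.j)
      = ((1 / 2) * ((1 + Real.cos u) + Real.cos v * (1 - Real.cos u))) • (1 : A)
        - ((1 - Real.cos v) * Real.sin u / 2) • b.i
        + (Real.sin v * (1 - Real.cos u) / 2) • b.j
        + (Real.sin v * Real.sin u / 2) • b.k := by
  have cos_eq (t : ℝ) : Real.cos t = 2 * Real.cos (t / 2) ^ 2 - 1 := by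
    rw [← Real.cos_two_mul]; congr 1; ring
  have sin_eq (t : ℝ) : Real.sin t = 2 * Real.sin (t / 2) * Real.cos (t / 2) := by
    rw [← Real.sin_two_mul]; congr 1; ring
  simp only [exp_smul_i, exp_smul_j, Real.cos_neg, Real.sin_neg]
  simp only [mul_add, add_mul, mul_sub, sub_mul, smul_mul_assoc, mul_smul_comm, smul_smul,
    one_mul, mul_one, i_mul_i, j_mul_j, i_mul_j, j_mul_i, k_mul_i, k_mul_j]
  rw [cos_eq u, cos_eq v, sin_eq u, sin_eq v]
  have hu := Real.sin_sq_add_cos_sq (u / 2)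
  have hv := Real.sin_sq_add_cos_sq (v / 2)
  match_scalars
  · linear_combination (Real.cos (v / 2) ^ 2 - Real.sin (v / 2) ^ 2) * hu
      + (2 * Real.cos (u / 2) ^ 2 - 1) * hv
  · linear_combination (-2 * Real.sin (u / 2) * Real.cos (u / 2)) * hv
  · linear_combination (2 * Real.cos (v / 2) * Real.sin (v / 2)) * hu
  · ring

end QuaternionAlgebra.Basis

theorem Matrix.mul_self_eq_neg_det_smul_one_of_trace_eq_zero {R : Type*} [CommRing R]
    [Nontrivial R] {M : Matrix (Fin 2) (Fin 2) R} (h : M.trace = 0) :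
    M * M = -M.det • (1 : Matrix (Fin 2) (Fin 2) R) := by
  have := M.aeval_self_charpoly
  rw [charpoly_fin_two, h] at this
  simp only [map_zero, zero_mul, sub_zero, map_add, map_pow, Polynomial.aeval_X,
    Polynomial.aeval_C, Algebra.algebraMap_eq_smul_one] at this
  rw [neg_smul, eq_neg_iff_add_eq_zero, ← sq, this]

attribute [local instance] Matrix.linftyOpNormedRing Matrix.linftyOpNormedAlgebra

theorem milnor_commutator_H_formula_general
    (e : Fin 3 → Matrix (Fin 2) (Fin 2) ℂ)
    (htr : ∀ i, (e i).trace = 0)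
    (hindep : LinearIndependent ℝ e)
    (h12 : e 0 * e 1 - e 1 * e 0 = e 2)
    (h23 : e 1 * e 2 - e 2 * e 1 = e 0)
    (h31 : e 2 * e 0 - e 0 * e 2 = e 1)
    (u v : ℝ) :
    NormedSpace.exp (-(u : ℂ) • e 0) * NormedSpace.exp (-(v : ℂ) • e 1)
        * NormedSpace.exp ((u : ℂ) • e 0) * NormedSpace.exp ((v : ℂ) • e 1)
      = (((1/2) * ((1 + Real.cos u) + Real.cos v * (1 - Real.cos u)) : ℝ) : ℂ)
          • (1 : Matrix (Fin 2) (Fin 2) ℂ)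
        - (((1 - Real.cos v) * Real.sin u : ℝ) : ℂ) • e 0
        + ((Real.sin v * (1 - Real.cos u) : ℝ) : ℂ) • e 1
        + ((Real.sin v * Real.sin u : ℝ) : ℂ) • e 2 := by
  obtain ⟨hxx, hyy, hxy, hyx⟩ := mul_table_of_milnor_relations (K := ℂ)
    (mul_self_eq_neg_det_smul_one_of_trace_eq_zero (htr 0))
    (mul_self_eq_neg_det_smul_one_of_trace_eq_zero (htr 1))
    h12 h23 h31 (hindep.ne_zero 0) (hindep.ne_zero 1)
  simp only [← Complex.ofReal_ofNat, ← Complex.ofReal_inv, ← Complex.ofReal_neg,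
    Complex.coe_smul] at hxx hyy hxy hyx
  have half (t : ℝ) (x : Matrix (Fin 2) (Fin 2) ℂ) : (t : ℂ) • x = (t / 2) • (2 : ℝ) • x := by
    rw [smul_smul, div_mul_cancel₀ _ two_ne_zero, Complex.coe_smul]
  rw [← Complex.ofReal_neg, ← Complex.ofReal_neg, half, half, half, half, neg_div, neg_div]
  refine ((QuaternionAlgebra.Basis.ofHalfUnits hxx hyy hxy hyx).exp_commutator u v).trans ?_
  dsimp only [QuaternionAlgebra.Basis.ofHalfUnits]
  simp only [smul_smul, ← Complex.coe_smul]
  match_scalars <;> ring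

theorem milnor_commutator_H_formula
    (e : Fin 3 → Matrix (Fin 2) (Fin 2) ℂ)
    (hskew : ∀ i, (e i)ᴴ = -(e i)) (htr : ∀ i, (e i).trace = 0)
    (hindep : LinearIndependent ℝ e)
    (h12 : e 0 * e 1 - e 1 * e 0 = e 2)
    (h23 : e 1 * e 2 - e 2 * e 1 = e 0)
    (h31 : e 2 * e 0 - e 0 * e 2 = e 1)
    (u v : ℝ) :
    NormedSpace.exp (-(u : ℂ) • e 0) * NormedSpace.exp (-(v : ℂ) • e 1)
        * NormedSpace.exp ((u : ℂ) • e 0) * NormedSpace.exp ((v : ℂ) • e 1)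
      = (((1/2) * ((1 + Real.cos u) + Real.cos v * (1 - Real.cos u)) : ℝ) : ℂ)
          • (1 : Matrix (Fin 2) (Fin 2) ℂ)
        - (((1 - Real.cos v) * Real.sin u : ℝ) : ℂ) • e 0
        + ((Real.sin v * (1 - Real.cos u) : ℝ) : ℂ) • e 1
        + ((Real.sin v * Real.sin u : ℝ) : ℂ) • e 2 :=
  milnor_commutator_H_formula_general e htr hindep h12 h23 h31 u v
end

section
/- Fix reals $0 < a_1 \leq a_2 \leq a_3$ and define $\overline{V}(r)$ piecewise by: $\overline{V}(r) = (a_1 a_2 a_3)^{-1} r^3$ for $0 \leq r \leq a_1 a_2/a_3$; $\overline{V}(r) = (a_1 a_2)^{-2} r^4$ for $a_1 a_2/a_3 \leq r \leq a_1$; $\overline{V}(r) = a_2^{-2} r^2$ for $a_1 \leq r \leq a_2$; and $\overline{V}(r) = 1$ for $r \geq a_2$. Then for every $r \geq 0$ and every $k \geq 1$, $\overline{V}(k r) \leq k^4\, \overline{V}(r)$. -/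
/-! On the four regions `V̄ r / r ^ 4` is a nonnegative multiple of `r⁻¹`, `1`, `r⁻²` and `r⁻⁴`
respectively, hence antitone on each; consecutive regions share an endpoint, so `V̄ r / r ^ 4` is
antitone on all of `(0, ∞)`, and that is the doubling inequality with exponent 4. -/

open Set

theorem antitoneOn_div_pow_of_eqOn_mul_pow {V : ℝ → ℝ} {s : Set ℝ} {c : ℝ} {m n : ℕ}
    (hs : s ⊆ Ioi 0) (hc : 0 ≤ c) (hmn : m ≤ n) (hV : ∀ r ∈ s, V r = c * r ^ m) :
    AntitoneOn (fun r => V r / r ^ n) s := by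
  have hVs : ∀ r ∈ s, V r / r ^ n = c / r ^ (n - m) := fun r hr => by
    have hr0 : r ≠ 0 := (hs hr).ne'
    rw [hV r hr, ← Nat.sub_add_cancel hmn, pow_add, Nat.add_sub_cancel]
    field_simp
  intro x hx y hy hxy
  simp only [hVs x hx, hVs y hy]
  exact div_le_div_of_nonneg_left hc (pow_pos (hs hx) _) (pow_le_pow_left₀ (hs hx).le hxy _)

theorem le_pow_mul_of_antitoneOn_div_pow {f : ℝ → ℝ} {n : ℕ}
    (hf : AntitoneOn (fun r => f r / r ^ n) (Ioi 0)) (hf0 : 0 ≤ f 0) {r k : ℝ}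
    (hr : 0 ≤ r) (hk : 1 ≤ k) : f (k * r) ≤ k ^ n * f r := by
  rcases hr.eq_or_lt with rfl | hr
  · simpa using le_mul_of_one_le_left hf0 (one_le_pow₀ hk)
  have hkr : 0 < k * r := by positivity
  have h := hf hr hkr (le_mul_of_one_le_left hr.le hk)
  rw [div_le_iff₀ (pow_pos hkr n)] at h
  calc f (k * r) ≤ f r / r ^ n * (k * r) ^ n := h
    _ = k ^ n * f r := by field_simp; ring

theorem Vbar_doubling
    (a1 a2 a3 : ℝ) (h0 : 0 < a1) (h12 : a1 ≤ a2) (h23 : a2 ≤ a3)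
    (V : ℝ → ℝ)
    (hV1 : ∀ r, 0 ≤ r → r ≤ a1 * a2 / a3 → V r = (a1 * a2 * a3)⁻¹ * r ^ 3)
    (hV2 : ∀ r, a1 * a2 / a3 ≤ r → r ≤ a1 → V r = ((a1 * a2) ^ 2)⁻¹ * r ^ 4)
    (hV3 : ∀ r, a1 ≤ r → r ≤ a2 → V r = (a2 ^ 2)⁻¹ * r ^ 2)
    (hV4 : ∀ r, a2 ≤ r → V r = 1) :
    ∀ r k : ℝ, 0 ≤ r → 1 ≤ k → V (k * r) ≤ k ^ 4 * V r := by
  have ha2 : 0 < a2 := h0.trans_le h12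
  have ha3 : 0 < a3 := ha2.trans_le h23
  have hb : 0 < a1 * a2 / a3 := by positivity
  have hb1 : a1 * a2 / a3 ≤ a1 := by
    rw [div_le_iff₀ ha3]
    exact mul_le_mul_of_nonneg_left h23 h0.le
  have hV : AntitoneOn (fun r => V r / r ^ 4) (Ioi 0) := by
    have hcubic := antitoneOn_div_pow_of_eqOn_mul_pow (s := Ioc 0 (a1 * a2 / a3)) (n := 4)
      Ioc_subset_Ioi_self (by positivity) (by norm_num) fun r hr => hV1 r hr.1.le hr.2
    have hquartic := antitoneOn_div_pow_of_eqOn_mul_pow (s := Icc (a1 * a2 / a3) a1) (n := 4)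
      (fun r hr => hb.trans_le hr.1) (by positivity) le_rfl fun r hr => hV2 r hr.1 hr.2
    have hquadratic := antitoneOn_div_pow_of_eqOn_mul_pow (s := Icc a1 a2) (n := 4)
      (fun r hr => h0.trans_le hr.1) (by positivity) (by norm_num) fun r hr => hV3 r hr.1 hr.2
    have hconst := antitoneOn_div_pow_of_eqOn_mul_pow (V := V) (s := Ici a2) (c := 1) (m := 0)
      (n := 4) (fun r hr => ha2.trans_le hr) zero_le_one (by norm_num)
      fun r hr => by simp [hV4 r hr]
    have h := hcubic.union_right hquartic (isGreatest_Ioc hb) (isLeast_Icc hb1)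
    rw [Ioc_union_Icc_eq_Ioc hb hb1] at h
    replace h := h.union_right hquadratic (isGreatest_Ioc h0) (isLeast_Icc h12)
    rw [Ioc_union_Icc_eq_Ioc h0 h12] at h
    replace h := h.union_right hconst (isGreatest_Ioc ha2) isLeast_Ici
    rwa [Ioc_union_Ici_eq_Ioi ha2] at h
  intro r k hr hk
  have hV0 : V 0 = 0 := by simp [hV1 0 le_rfl hb.le]
  exact le_pow_mul_of_antitoneOn_div_pow hV hV0.ge hr hk
end
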